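/- Let G be a finite connected simple graph admitting a disjunctive set-indexer f with respect to X such that f(V(G)) is the discrete topology on X, i.e., f(V(G)) equals the full power set of X. Then f is graceful: the set of edge labels f∪(E(G)) equals the power set of X with the empty set removed. -/

import Mathlib

/-- The induced edge-labeling of a disjunctive set-labeling: the label of an
edge is the union of the labels of its endpoints. -/
def unionLabel {V X : Type*} [DecidableEq X] (f : V → Finset X) : Sym2 V → Finset X :=
  Sym2.lift ⟨fun u v => f u ∪ f v, fun u v => Finset.union_comm (f u) (f v)⟩

/-- A disjunctive set-indexer of a graph `G`: an injective vertex labeling by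
subsets of a ground set whose induced edge labeling (by unions) is injective
on the edge set. -/
def IsDSI {V X : Type*} [DecidableEq X] (G : SimpleGraph V) (f : V → Finset X) : Prop :=
  Function.Injective f ∧ Set.InjOn (unionLabel f) G.edgeSet

/-!
Since `f` is injective, at most one vertex is labelled `∅`, so no edge gets the label `∅`.
If `f` is onto `𝒫 X` then `G` has `2 ^ |X|` vertices, hence, being connected, at least
`2 ^ |X| - 1` edges, and these carry pairwise distinct nonempty labels. There are only
`2 ^ |X| - 1` nonempty subsets of `X`, so every one of them occurs.
-/

lemma ncard_ne_empty_finset_add_one {X : Type*} [Fintype X] :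
    {A : Finset X | A ≠ ∅}.ncard + 1 = 2 ^ Fintype.card X := by
  rw [← Fintype.card_finset, ← Nat.card_eq_fintype_card, ← Set.ncard_singleton (∅ : Finset X)]
  exact Set.ncard_compl_add_ncard {∅}

section DSI

variable {V X : Type*} [DecidableEq X]

@[simp]
lemma unionLabel_mk (f : V → Finset X) (u v : V) : unionLabel f s(u, v) = f u ∪ f v := rfl

lemma image_unionLabel_subset_ne_empty {G : SimpleGraph V} {f : V → Finset X}
    (hf : Function.Injective f) : unionLabel f '' G.edgeSet ⊆ {A | A ≠ ∅} := by
  rintro _ ⟨e, he, rfl⟩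
  induction e with
  | _ u v =>
    rw [unionLabel_mk, Set.mem_ofPred_eq, Ne, Finset.union_eq_empty]
    rintro ⟨hu, hv⟩
    exact G.ne_of_adj he (hf (hu.trans hv.symm))

lemma IsDSI.ncard_image_unionLabel {G : SimpleGraph V} {f : V → Finset X} (hf : IsDSI G f) :
    (unionLabel f '' G.edgeSet).ncard = Nat.card G.edgeSet := by
  rw [hf.2.ncard_image, Nat.card_coe_set_eq]

end DSI

theorem DSI_discrete_is_graceful_general {V X : Type*} [Fintype X] [DecidableEq X]
    (G : SimpleGraph V) (hG : G.Connected) (f : V → Finset X) (hf : IsDSI G f)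
    (hfull : Set.range f = Set.univ) :
    unionLabel f '' G.edgeSet = {A : Finset X | A ≠ ∅} := by
  have hcardV : Nat.card V = 2 ^ Fintype.card X := by
    rw [← Fintype.card_finset, ← Nat.card_eq_fintype_card]
    exact Nat.card_eq_of_bijective f ⟨hf.1, Set.range_eq_univ.mp hfull⟩
  refine Set.eq_of_subset_of_ncard_le (image_unionLabel_subset_ne_empty hf.1) ?_ (Set.toFinite _)
  have hedges := hG.card_vert_le_card_edgeSet_add_one
  have htarget := ncard_ne_empty_finset_add_one (X := X)
  rw [hf.ncard_image_unionLabel]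
  omega

/-- If a connected graph admits a disjunctive set-indexer whose vertex labels
form the discrete topology (the full power set) on the ground set, then the
indexer is graceful: the edge labels are exactly the nonempty subsets. -/
theorem DSI_discrete_is_graceful {V X : Type*} [Fintype V] [Fintype X] [DecidableEq X]
    (G : SimpleGraph V) (hG : G.Connected) (f : V → Finset X) (hf : IsDSI G f)
    (hfull : Set.range f = Set.univ) :
    unionLabel f '' G.edgeSet = {A : Finset X | A ≠ ∅} :=
  DSI_discrete_is_graceful_general G hG f hf hfull
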